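/- Let E be a finite set and for each e ∈ E let w_e > 0 and l_e > 0 be real constants, θ_e(y) = (l_e − y)/w_e and σ_e(s) = s + l_e/w_e. For each e ∈ E let μ₀^e be a finite Borel measure on ℝ supported in [0, l_e], let μ_b^e and μ_a^e be finite Borel measures on ℝ supported in [0,∞), and for each ordered pair (e′, e) ∈ E × E let μ_{e′→e} be a finite Borel measure on ℝ supported in [0,∞); set μ_in^e := ∑_{e′ ∈ E} μ_{e′→e}. Assume the conservation condition θ_e#μ₀^e + σ_e#(μ_in^e + μ_b^e) = μ_a^e + ∑_{e″ ∈ E} μ_{e→e″} for every e ∈ E, and define ν^e := T₀^{w_e, l_e}(μ₀^e) + T_b^{w_e, l_e}(μ_in^e) + T_b^{w_e, l_e}(μ_b^e). Let (φ^e)_{e ∈ E} be a family of continuously differentiable compactly supported functions φ^e : ℝ² → ℝ such that for all e′, e ∈ E and μ_{e′→e}-almost every t, φ^{e′}(l_{e′}, t) = φ^e(0, t). Then ∑_{e ∈ E} [ ∫_{ℝ²}(∂_tφ^e + w_e·∂_xφ^e) dν^e + ∫_ℝ φ^e(y,0) dμ₀^e(y) + ∫_ℝ φ^e(0,s) dμ_b^e(s)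 − ∫_ℝ φ^e(l_e, s) dμ_a^e(s) ] = 0; that is, the family (ν^e)_{e ∈ E} is a measure-valued solution of the tram network problem in the sense of Definition 3.5. -/

import Mathlib

open MeasureTheory

/-- The interior transport measure from an initial datum `μ₀` supported in `[0,l]`:
the pushforward under `(y,t) ↦ (y + t·w, t)` of the restriction of `μ₀ ⊗ Leb`
to `{(y,t) : 0 ≤ t ≤ (l − y)/w}`. -/
noncomputable def T0 (w l : ℝ) (μ₀ : MeasureTheory.Measure ℝ) :
    MeasureTheory.Measure (ℝ × ℝ) :=
  Measure.map (fun p : ℝ × ℝ => (p.1 + p.2 * w, p.2))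
    ((μ₀.prod volume).restrict {p : ℝ × ℝ | 0 ≤ p.2 ∧ p.2 ≤ (l - p.1) / w})

/-- The interior transport measure from a boundary datum `μ` supported in `[0,∞)`:
the pushforward under `(s,t) ↦ ((t − s)·w, t)` of the restriction of `μ ⊗ Leb`
to `{(s,t) : s ≤ t ≤ s + l/w}`. -/
noncomputable def Tb (w l : ℝ) (μ : MeasureTheory.Measure ℝ) :
    MeasureTheory.Measure (ℝ × ℝ) :=
  Measure.map (fun p : ℝ × ℝ => ((p.2 - p.1) * w, p.2))
    ((μ.prod volume).restrict {p : ℝ × ℝ | p.1 ≤ p.2 ∧ p.2 ≤ p.1 + l / w})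


/-! Along a characteristic `t ↦ (x + t * w, t)` the integrand `∂ₜφ + w ∂ₓφ` is the derivative of
`t ↦ φ (x + t * w, t)`, so by Fubini and the fundamental theorem of calculus each transport
measure turns the weak form into the values of `φ` at the two ends of the characteristics: the
entry points `(y, 0)`, `(0, s)` and the exit points `(l, θ y)`, `(l, σ s)`. On each edge the
conservation law rewrites the exit terms as the alighting term plus the outflows
`∫ φ e (l e, ·) ∂μT e e''`; summed over the network, these cancel the inflows
`∫ φ e (0, ·) ∂μT e' e` by the continuity of the test family across the vertices. -/

open Set

section Integrability

variable {X Y E : Type*} [MeasurableSpace X] [TopologicalSpace Y] [NormedAddCommGroup E]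

theorem Continuous.integrable_comp_of_hasCompactSupport {μ : Measure X} [IsFiniteMeasure μ]
    {φ : Y → E} (hφ : Continuous φ) (hφc : HasCompactSupport φ) {f : X → Y}
    (hf : AEStronglyMeasurable f μ) : Integrable (fun x => φ (f x)) μ := by
  obtain ⟨C, hC⟩ := hφ.bounded_above_of_compact_support hφc
  exact .of_bound (hφ.comp_aestronglyMeasurable hf) C (.of_forall fun x => hC (f x))

end Integrability

theorem integral_fderiv_comp_add_smul {E F : Type*} [NormedAddCommGroup E] [NormedSpace ℝ E]
    [NormedAddCommGroup F] [NormedSpace ℝ F] [CompleteSpace F] {φ : E → F}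
    (hφ : ContDiff ℝ 1 φ) (x v : E) (a b : ℝ) :
    ∫ t in a..b, fderiv ℝ φ (x + t • v) v = φ (x + b • v) - φ (x + a • v) := by
  have hderiv : ∀ t : ℝ, HasDerivAt (fun t : ℝ => φ (x + t • v)) (fderiv ℝ φ (x + t • v) v) t := by
    intro t
    simpa [Function.comp_def] using ((hφ.differentiable one_ne_zero) _).hasFDerivAt.comp_hasDerivAt
      t (((hasDerivAt_id t).smul_const v).const_add x)
  have hcont : Continuous fun t : ℝ => fderiv ℝ φ (x + t • v) v :=
    (hφ.continuous_fderiv_apply one_ne_zero).comp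
      ((continuous_const.add (continuous_id.smul continuous_const)).prodMk continuous_const)
  exact intervalIntegral.integral_eq_sub_of_hasDerivAt (fun t _ => hderiv t)
    (hcont.intervalIntegrable a b)

section BetweenGraphs

variable {α : Type*} [MeasurableSpace α] {μ : Measure α} {c d : α → ℝ}

theorem measurableSet_between_graphs (hc : Measurable c) (hd : Measurable d) :
    MeasurableSet {p : α × ℝ | c p.1 ≤ p.2 ∧ p.2 ≤ d p.1} :=
  (measurableSet_le (hc.comp measurable_fst) measurable_snd).inter
    (measurableSet_le measurable_snd (hd.comp measurable_fst))

theorem isFiniteMeasure_restrict_prod_between_graphs [IsFiniteMeasure μ] (hc : Measurable c)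
    (hd : Measurable d) {M : ℝ} (hM : ∀ᵐ y ∂μ, d y - c y ≤ M) :
    IsFiniteMeasure ((μ.prod volume).restrict {p : α × ℝ | c p.1 ≤ p.2 ∧ p.2 ≤ d p.1}) := by
  constructor
  rw [Measure.restrict_apply_univ, Measure.prod_apply (measurableSet_between_graphs hc hd)]
  calc ∫⁻ y, volume (Icc (c y) (d y)) ∂μ
      ≤ ∫⁻ _, ENNReal.ofReal M ∂μ := lintegral_mono_ae <| hM.mono fun y hy => by
        rw [Real.volume_Icc]
        exact ENNReal.ofReal_le_ofReal hy
    _ < ⊤ := by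
        rw [lintegral_const]
        exact ENNReal.mul_lt_top ENNReal.ofReal_lt_top (measure_lt_top μ univ)

theorem integral_restrict_prod_between_graphs [SFinite μ] {E : Type*} [NormedAddCommGroup E]
    [NormedSpace ℝ E] (hc : Measurable c) (hd : Measurable d) (hcd : ∀ᵐ y ∂μ, c y ≤ d y)
    {f : α × ℝ → E}
    (hf : IntegrableOn f {p : α × ℝ | c p.1 ≤ p.2 ∧ p.2 ≤ d p.1} (μ.prod volume)) :
    ∫ p in {p : α × ℝ | c p.1 ≤ p.2 ∧ p.2 ≤ d p.1}, f p ∂(μ.prod volume)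
      = ∫ y, (∫ t in c y..d y, f (y, t)) ∂μ := by
  have hS := measurableSet_between_graphs hc hd
  rw [← integral_indicator hS, integral_prod _ ((integrable_indicator_iff hS).2 hf)]
  refine integral_congr_ae (hcd.mono fun y hy => ?_)
  change ∫ t, (Icc (c y) (d y)).indicator (fun t => f (y, t)) t = _
  rw [integral_indicator measurableSet_Icc, integral_Icc_eq_integral_Ioc]
  exact (intervalIntegral.integral_of_le hy).symm

theorem integral_fderiv_map_restrict_prod_between_graphs [IsFiniteMeasure μ]
    {φ : ℝ × ℝ → ℝ} (hφ : ContDiff ℝ 1 φ) (hφc : HasCompactSupport φ) (w : ℝ) {a : α → ℝ}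
    (ha : Measurable a) (hc : Measurable c) (hd : Measurable d) {M : ℝ}
    (hM : ∀ᵐ y ∂μ, d y - c y ≤ M) (hcd : ∀ᵐ y ∂μ, c y ≤ d y) :
    ∫ p, fderiv ℝ φ p (w, 1) ∂(Measure.map (fun p : α × ℝ => (a p.1 + p.2 * w, p.2))
        ((μ.prod volume).restrict {p : α × ℝ | c p.1 ≤ p.2 ∧ p.2 ≤ d p.1}))
      = ∫ y, (φ (a y + d y * w, d y) - φ (a y + c y * w, c y)) ∂μ := by
  have := isFiniteMeasure_restrict_prod_between_graphs hc hd hM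
  have hg : Continuous fun p => fderiv ℝ φ p (w, 1) :=
    (hφ.continuous_fderiv_apply one_ne_zero).comp (continuous_id.prodMk continuous_const)
  have hF : Measurable fun p : α × ℝ => (a p.1 + p.2 * w, p.2) := by fun_prop
  rw [integral_map hF.aemeasurable hg.aestronglyMeasurable,
    integral_restrict_prod_between_graphs hc hd hcd
      (hg.integrable_comp_of_hasCompactSupport (hφc.fderiv_apply ℝ _) hF.aestronglyMeasurable)]
  have hline : ∀ x t : ℝ, (x + t * w, t) = (x, 0) + t • (w, 1) := by
    intro x t
    ext <;> simp
  simp only [hline, integral_fderiv_comp_add_smul hφ]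

end BetweenGraphs

section Transport

variable {w l : ℝ} {φ : ℝ × ℝ → ℝ}

theorem isFiniteMeasure_T0 (hw : 0 < w) {μ₀ : Measure ℝ} [IsFiniteMeasure μ₀]
    (hμ₀ : μ₀ (Icc 0 l)ᶜ = 0) : IsFiniteMeasure (T0 w l μ₀) := by
  have := isFiniteMeasure_restrict_prod_between_graphs (μ := μ₀) (c := fun _ => 0)
    (d := fun y => (l - y) / w) (by fun_prop) (by fun_prop) (M := l / w)
    ((ae_iff.2 hμ₀ : ∀ᵐ y ∂μ₀, y ∈ Icc 0 l).mono fun y hy => by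
      simp only [sub_zero]
      gcongr
      linarith [hy.1])
  exact Measure.isFiniteMeasure_map (_ : Measure (ℝ × ℝ)) _

instance isFiniteMeasure_Tb {μ : Measure ℝ} [IsFiniteMeasure μ] : IsFiniteMeasure (Tb w l μ) := by
  have := isFiniteMeasure_restrict_prod_between_graphs (μ := μ) (c := fun s => s)
    (d := fun s => s + l / w) (by fun_prop) (by fun_prop) (M := l / w) (.of_forall fun s => by simp)
  exact Measure.isFiniteMeasure_map (_ : Measure (ℝ × ℝ)) _

theorem integral_fderiv_T0 (hw : 0 < w) {μ₀ : Measure ℝ} [IsFiniteMeasure μ₀]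
    (hμ₀ : μ₀ (Icc 0 l)ᶜ = 0) (hφ : ContDiff ℝ 1 φ) (hφc : HasCompactSupport φ) :
    ∫ p, fderiv ℝ φ p (w, 1) ∂(T0 w l μ₀) = ∫ y, (φ (l, (l - y) / w) - φ (y, 0)) ∂μ₀ := by
  have hsupp : ∀ᵐ y ∂μ₀, y ∈ Icc 0 l := ae_iff.2 hμ₀
  refine (integral_fderiv_map_restrict_prod_between_graphs hφ hφc w (a := fun y => y)
    (c := fun _ => 0) (d := fun y => (l - y) / w) (by fun_prop) (by fun_prop) (by fun_prop)
    (M := l / w) (hsupp.mono fun y hy => ?_) (hsupp.mono fun y hy => ?_)).trans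
    (integral_congr_ae (.of_forall fun y => ?_))
  · simp only [sub_zero]
    gcongr
    linarith [hy.1]
  · exact div_nonneg (sub_nonneg.2 hy.2) hw.le
  · simp only [zero_mul, add_zero, div_mul_cancel₀ _ hw.ne', add_sub_cancel]

theorem integral_fderiv_Tb (hw : 0 < w) (hl : 0 ≤ l) {μ : Measure ℝ} [IsFiniteMeasure μ]
    (hφ : ContDiff ℝ 1 φ) (hφc : HasCompactSupport φ) :
    ∫ p, fderiv ℝ φ p (w, 1) ∂(Tb w l μ) = ∫ s, (φ (l, s + l / w) - φ (0, s)) ∂μ := by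
  have hmap : (fun p : ℝ × ℝ => ((p.2 - p.1) * w, p.2))
      = fun p : ℝ × ℝ => (-(p.1 * w) + p.2 * w, p.2) := by
    funext p
    simp only [Prod.mk.injEq, and_true]
    ring
  rw [Tb, hmap]
  refine (integral_fderiv_map_restrict_prod_between_graphs hφ hφc w (a := fun s => -(s * w))
    (c := fun s => s) (d := fun s => s + l / w) (by fun_prop) (by fun_prop) (by fun_prop)
    (M := l / w) (.of_forall fun s => by simp) (.of_forall fun s => by simp; positivity)).trans
    (integral_congr_ae (.of_forall fun s => ?_))
  simp only [add_mul, div_mul_cancel₀ _ hw.ne', neg_add_cancel_left, neg_add_cancel]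

end Transport

section Edge

variable {w l : ℝ} {μ₀ μin μb μa μout : Measure ℝ} [IsFiniteMeasure μ₀] [IsFiniteMeasure μin]
  [IsFiniteMeasure μb] [IsFiniteMeasure μa] [IsFiniteMeasure μout] {φ : ℝ × ℝ → ℝ}

theorem integral_exit_eq_of_conservation
    (hcons : Measure.map (fun y => (l - y) / w) μ₀ + Measure.map (fun s => s + l / w) (μin + μb)
      = μa + μout)
    (hφ : Continuous φ) (hφc : HasCompactSupport φ) :
    ∫ y, φ (l, (l - y) / w) ∂μ₀ + ∫ s, φ (l, s + l / w) ∂μin + ∫ s, φ (l, s + l / w) ∂μb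
      = ∫ s, φ (l, s) ∂μa + ∫ t, φ (l, t) ∂μout := by
  have hφi : ∀ (ν : Measure ℝ) [IsFiniteMeasure ν] (f : ℝ → ℝ × ℝ), Continuous f →
      Integrable (fun x => φ (f x)) ν :=
    fun ν _ f hf => hφ.integrable_comp_of_hasCompactSupport hφc hf.aestronglyMeasurable
  have hθ : Measurable fun y => (l - y) / w := by fun_prop
  have hσ : Measurable fun s => s + l / w := by fun_prop
  have hψ : Continuous fun t => φ (l, t) := by fun_prop
  rw [add_assoc, ← integral_add_measure (hφi _ _ (by fun_prop)) (hφi _ _ (by fun_prop)),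
    ← integral_map hθ.aemeasurable hψ.aestronglyMeasurable,
    ← integral_map hσ.aemeasurable hψ.aestronglyMeasurable,
    ← integral_add_measure (hφi _ _ (by fun_prop)) (hφi _ _ (by fun_prop)), hcons,
    integral_add_measure (hφi _ _ (by fun_prop)) (hφi _ _ (by fun_prop))]

theorem edge_weak_form_eq_outflow_sub_inflow (hw : 0 < w) (hl : 0 ≤ l)
    (hμ₀ : μ₀ (Icc 0 l)ᶜ = 0)
    (hcons : Measure.map (fun y => (l - y) / w) μ₀ + Measure.map (fun s => s + l / w) (μin + μb)
      = μa + μout)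
    (hφ : ContDiff ℝ 1 φ) (hφc : HasCompactSupport φ) :
    ∫ p, (fderiv ℝ φ p (0, 1) + w * fderiv ℝ φ p (1, 0)) ∂(T0 w l μ₀ + Tb w l μin + Tb w l μb)
        + ∫ y, φ (y, 0) ∂μ₀ + ∫ s, φ (0, s) ∂μb - ∫ s, φ (l, s) ∂μa
      = ∫ t, φ (l, t) ∂μout - ∫ s, φ (0, s) ∂μin := by
  have := isFiniteMeasure_T0 hw hμ₀
  have hdir : (fun p => fderiv ℝ φ p (0, 1) + w * fderiv ℝ φ p (1, 0))
      = fun p => fderiv ℝ φ p (w, 1) := by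
    funext p
    have hv : ((w, 1) : ℝ × ℝ) = w • (1, 0) + (0, 1) := by ext <;> simp
    rw [hv, map_add, map_smul, smul_eq_mul, add_comm]
  have hg : Continuous fun p => fderiv ℝ φ p (w, 1) :=
    (hφ.continuous_fderiv_apply one_ne_zero).comp (continuous_id.prodMk continuous_const)
  have hgi : ∀ (ν : Measure (ℝ × ℝ)) [IsFiniteMeasure ν],
      Integrable (fun p => fderiv ℝ φ p (w, 1)) ν :=
    fun ν _ => hg.integrable_comp_of_hasCompactSupport (hφc.fderiv_apply ℝ _)
      aestronglyMeasurable_id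
  have hφi : ∀ (ν : Measure ℝ) [IsFiniteMeasure ν] (f : ℝ → ℝ × ℝ), Continuous f →
      Integrable (fun x => φ (f x)) ν :=
    fun ν _ f hf => hφ.continuous.integrable_comp_of_hasCompactSupport hφc hf.aestronglyMeasurable
  rw [hdir, integral_add_measure ((hgi _).add_measure (hgi _)) (hgi _),
    integral_add_measure (hgi _) (hgi _), integral_fderiv_T0 hw hμ₀ hφ hφc,
    integral_fderiv_Tb hw hl hφ hφc, integral_fderiv_Tb hw hl hφ hφc,
    integral_sub (hφi _ _ (by fun_prop)) (hφi _ _ (by fun_prop)),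
    integral_sub (hφi _ _ (by fun_prop)) (hφi _ _ (by fun_prop)),
    integral_sub (hφi _ _ (by fun_prop)) (hφi _ _ (by fun_prop))]
  linarith [integral_exit_eq_of_conservation hcons hφ.continuous hφc]

end Edge

theorem network_weak_solution_general (E : Type*) [Fintype E]
    (w l : E → ℝ) (hw : ∀ e, 0 < w e) (hl : ∀ e, 0 < l e)
    (μ₀ μb μa : E → Measure ℝ)
    [∀ e, IsFiniteMeasure (μ₀ e)] [∀ e, IsFiniteMeasure (μb e)]
    [∀ e, IsFiniteMeasure (μa e)]
    (hμ₀ : ∀ e, (μ₀ e) ((Set.Icc (0 : ℝ) (l e))ᶜ) = 0)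
    (μT : E → E → Measure ℝ) [∀ e' e, IsFiniteMeasure (μT e' e)]
    (hcons : ∀ e, Measure.map (fun y => (l e - y) / w e) (μ₀ e)
        + Measure.map (fun s => s + l e / w e) ((∑ e' : E, μT e' e) + μb e)
        = μa e + ∑ e'' : E, μT e e'')
    (φ : E → ℝ × ℝ → ℝ)
    (hφ : ∀ e, ContDiff ℝ 1 (φ e)) (hφc : ∀ e, HasCompactSupport (φ e))
    (hvert : ∀ e' e, ∀ᵐ t ∂(μT e' e), φ e' (l e', t) = φ e (0, t)) :
    ∑ e : E,
      (∫ p, (fderiv ℝ (φ e) p (0, 1) + w e * fderiv ℝ (φ e) p (1, 0))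
          ∂(T0 (w e) (l e) (μ₀ e) + Tb (w e) (l e) (∑ e' : E, μT e' e)
            + Tb (w e) (l e) (μb e))
        + ∫ y, φ e (y, 0) ∂(μ₀ e)
        + ∫ s, φ e (0, s) ∂(μb e)
        - ∫ s, φ e (l e, s) ∂(μa e)) = 0 := by
  have hslice : ∀ e x e₁ e₂, Integrable (fun t => φ e (x, t)) (μT e₁ e₂) := fun e x _ _ =>
    (hφ e).continuous.integrable_comp_of_hasCompactSupport (hφc e)
      (by fun_prop : Continuous fun t : ℝ => (x, t)).aestronglyMeasurable
  rw [Finset.sum_congr rfl fun e _ =>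
      edge_weak_form_eq_outflow_sub_inflow (hw e) (hl e).le (hμ₀ e) (hcons e) (hφ e) (hφc e),
    Finset.sum_sub_distrib, sub_eq_zero]
  simp only [integral_finsetSum_measure fun _ _ => hslice _ _ _ _]
  rw [Finset.sum_comm (f := fun e e' => ∫ t, φ e (0, t) ∂μT e' e)]
  exact Finset.sum_congr rfl fun e' _ => Finset.sum_congr rfl fun e _ =>
    integral_congr_ae (hvert e' e)

/-- Existence part of Theorem 3.3 (network version): with the coupling
conditions encoded by transfer measures `μT_{e′→e}` satisfying the conservation
condition `θ_e#μ₀^e + σ_e#(μ_in^e + μ_b^e) = μ_a^e + ∑_{e″} μT_{e→e″}`, the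
family `ν^e = T₀(μ₀^e) + T_b(μ_in^e) + T_b(μ_b^e)` is a measure-valued
solution of the tram network problem (Definition 3.5). -/
theorem network_weak_solution (E : Type*) [Fintype E]
    (w l : E → ℝ) (hw : ∀ e, 0 < w e) (hl : ∀ e, 0 < l e)
    (μ₀ μb μa : E → Measure ℝ)
    [∀ e, IsFiniteMeasure (μ₀ e)] [∀ e, IsFiniteMeasure (μb e)]
    [∀ e, IsFiniteMeasure (μa e)]
    (hμ₀ : ∀ e, (μ₀ e) ((Set.Icc (0 : ℝ) (l e))ᶜ) = 0)
    (hμb : ∀ e, (μb e) ((Set.Ici (0 : ℝ))ᶜ) = 0)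
    (hμa : ∀ e, (μa e) ((Set.Ici (0 : ℝ))ᶜ) = 0)
    (μT : E → E → Measure ℝ) [∀ e' e, IsFiniteMeasure (μT e' e)]
    (hμT : ∀ e' e, (μT e' e) ((Set.Ici (0 : ℝ))ᶜ) = 0)
    (hcons : ∀ e, Measure.map (fun y => (l e - y) / w e) (μ₀ e)
        + Measure.map (fun s => s + l e / w e) ((∑ e' : E, μT e' e) + μb e)
        = μa e + ∑ e'' : E, μT e e'')
    (φ : E → ℝ × ℝ → ℝ)
    (hφ : ∀ e, ContDiff ℝ 1 (φ e)) (hφc : ∀ e, HasCompactSupport (φ e))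
    (hvert : ∀ e' e, ∀ᵐ t ∂(μT e' e), φ e' (l e', t) = φ e (0, t)) :
    ∑ e : E,
      (∫ p, (fderiv ℝ (φ e) p (0, 1) + w e * fderiv ℝ (φ e) p (1, 0))
          ∂(T0 (w e) (l e) (μ₀ e) + Tb (w e) (l e) (∑ e' : E, μT e' e)
            + Tb (w e) (l e) (μb e))
        + ∫ y, φ e (y, 0) ∂(μ₀ e)
        + ∫ s, φ e (0, s) ∂(μb e)
        - ∫ s, φ e (l e, s) ∂(μa e)) = 0 :=
  network_weak_solution_general E w l hw hl μ₀ μb μa hμ₀ μT hcons φ hφ hφc hvert
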